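/- Let C be an exact inverse category, f : A → B a morphism, u : X → A and v : Y → B monomorphisms. Then: (i) the image of f ∘ u is the subobject (Y, v) if and only if P(f)(u ∘ u*) = v ∘ v*; (ii) the inverse image of the subobject (Y, v) under f is (X, u) (i.e. the square obtained by pulling back v along f has left edge u) if and only if P′(f)(v ∘ v*) = u ∘ u*. -/

import Mathlib

open CategoryTheory CategoryTheory.Limits

universe v u

/-- An operation assigning to each morphism a morphism in the opposite direction. -/
def MorphismOp (C : Type u) [Category.{v} C] : Type (max u v) :=
  ∀ {A B : C}, (A ⟶ B) → (B ⟶ A)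

variable {C : Type u} [Category.{v} C]

/-- `s` is an involution: a contravariant endofunctor which is the identity on objects
and involutive on morphisms. -/
def IsInvolution (s : MorphismOp C) : Prop :=
  (∀ {A B D : C} (f : A ⟶ B) (g : B ⟶ D), s (f ≫ g) = s g ≫ s f) ∧
  (∀ A : C, s (𝟙 A) = 𝟙 A) ∧
  (∀ {A B : C} (f : A ⟶ B), s (s f) = f)

/-- A projection on `A` is an idempotent endomorphism fixed by the involution `s`. -/
def IsProjection (s : MorphismOp C) {A : C} (i : A ⟶ A) : Prop :=
  i ≫ i = i ∧ s i = i

/-- `g` is a Moore–Penrose generalized inverse of `f` with respect to `s`: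
`f g f = f`, `g f g = g`, `(f g)* = f g`, `(g f)* = g f`. -/
def IsMoorePenrose (s : MorphismOp C) {A B : C} (f : A ⟶ B) (g : B ⟶ A) : Prop :=
  f ≫ g ≫ f = f ∧ g ≫ f ≫ g = g ∧ s (f ≫ g) = f ≫ g ∧ s (g ≫ f) = g ≫ f

/-- `inv` makes `C` an inverse category: each morphism `f` has `inv f` as its unique
generalized inverse (`f ∘ (inv f) ∘ f = f` and `(inv f) ∘ f ∘ (inv f) = inv f`). -/
def IsInverseOp (inv : MorphismOp C) : Prop :=
  ∀ {A B : C} (f : A ⟶ B),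
    (f ≫ inv f ≫ f = f ∧ inv f ≫ f ≫ inv f = inv f) ∧
    ∀ g : B ⟶ A, f ≫ g ≫ f = f → g ≫ f ≫ g = g → g = inv f

/-- `u` is a kernel of `f`. -/
def IsKernelOf [HasZeroMorphisms C] {K A B : C} (u : K ⟶ A) (f : A ⟶ B) : Prop :=
  u ≫ f = 0 ∧ ∀ {X : C} (g : X ⟶ A), g ≫ f = 0 → ∃! h : X ⟶ K, h ≫ u = g

/-- `v` is a cokernel of `f`. -/
def IsCokernelOf [HasZeroMorphisms C] {A B Q : C} (v : B ⟶ Q) (f : A ⟶ B) : Prop :=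
  f ≫ v = 0 ∧ ∀ {X : C} (g : B ⟶ X), f ≫ g = 0 → ∃! h : Q ⟶ X, v ≫ h = g

/-- An exact category (in the sense of the paper): a category with a zero object,
kernels and cokernels, in which every monomorphism is a kernel, every epimorphism is a
cokernel, and every morphism factors as a monomorphism composed with an epimorphism. -/
structure IsExactCategory (C : Type u) [Category.{v} C] [HasZeroObject C]
    [HasZeroMorphisms C] : Prop where
  hasKernels : ∀ {A B : C} (f : A ⟶ B), ∃ (K : C) (u : K ⟶ A), IsKernelOf u f
  hasCokernels : ∀ {A B : C} (f : A ⟶ B), ∃ (Q : C) (v : B ⟶ Q), IsCokernelOf v f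
  normal : ∀ {X A : C} (u : X ⟶ A), Mono u → ∃ (B : C) (f : A ⟶ B), IsKernelOf u f
  conormal : ∀ {A B : C} (v : A ⟶ B), Epi v → ∃ (X : C) (f : X ⟶ A), IsCokernelOf v f
  monoEpiFact : ∀ {A B : C} (f : A ⟶ B),
    ∃ (I : C) (q : A ⟶ I) (p : I ⟶ B), Epi q ∧ Mono p ∧ q ≫ p = f

/-- A Baer*-structure on `C` with respect to `s`: each morphism `f` has a projection
`f′ = prj f` on its domain with `f ∘ g = 0` iff `g` factors through `f′`. -/
structure BaerStar (C : Type u) [Category.{v} C] [HasZeroObject C] [HasZeroMorphisms C]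
    (s : MorphismOp C) where
  prj : ∀ {A B : C}, (A ⟶ B) → (A ⟶ A)
  prj_isProjection : ∀ {A B : C} (f : A ⟶ B), IsProjection s (prj f)
  prj_spec : ∀ {A B X : C} (f : A ⟶ B) (g : X ⟶ A),
    g ≫ f = 0 ↔ ∃ h : X ⟶ A, g = h ≫ prj f

/-- The natural partial order on projections: `e ≤ f` iff `e = e ∘ f`. -/
def ProjLe {A : C} (e f : A ⟶ A) : Prop := f ≫ e = e

/-- `p` is the image of `g`: the smallest subobject of the codomain of `g` through
which `g` factors. -/
def IsImageOf {A B I : C} (p : I ⟶ B) (g : A ⟶ B) : Prop :=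
  Mono p ∧ (∃ t : A ⟶ I, t ≫ p = g) ∧
  ∀ {S : C} (t : A ⟶ S) (m : S ⟶ B), Mono m → t ≫ m = g → ∃ w : I ⟶ S, w ≫ m = p

/-! In an inverse category idempotents commute, so a projection is determined by the morphisms
it fixes, and `g` factors through `m` iff `inv g ≫ g` is below `inv m ≫ m`. Part (i) follows
because `inv g ≫ g` only depends on the mono part of an epi–mono factorization of `g`. For
part (ii), writing `v` as a kernel shows that `Bs.prj (inv v ≫ v)` annihilates exactly the
morphisms factoring through `v` (since `f″` has the same annihilator as `f`), so both sides
of (ii) say that `g` factors through `u` iff `g ≫ f` factors through `v`, which is the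
pullback property of monos. -/

theorem exists_isPullback_iff_of_mono {X Y A B : C} {u : X ⟶ A} {v : Y ⟶ B} (f : A ⟶ B)
    [Mono u] [Mono v] :
    (∃ t : X ⟶ Y, IsPullback t u v f) ↔
      ∀ {T : C} (g : T ⟶ A), (∃ a : T ⟶ Y, a ≫ v = g ≫ f) ↔ ∃ l : T ⟶ X, l ≫ u = g := by
  constructor
  · rintro ⟨t, hpb⟩ T g
    constructor
    · rintro ⟨a, ha⟩
      exact ⟨hpb.lift a g ha, hpb.lift_snd a g ha⟩
    · rintro ⟨l, rfl⟩
      exact ⟨l ≫ t, by rw [Category.assoc, hpb.w, Category.assoc]⟩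
  · intro hfac
    obtain ⟨t, ht⟩ := (hfac u).mpr ⟨𝟙 X, Category.id_comp u⟩
    have comm : CommSq t u v f := ⟨ht⟩
    choose l hl using fun s : PullbackCone v f => (hfac s.snd).mp ⟨s.fst, s.condition⟩
    refine ⟨t, IsPullback.of_isLimit' comm (PullbackCone.IsLimit.mk comm.w l ?_ hl ?_)⟩
    · intro s
      rw [← cancel_mono v, Category.assoc, ht, reassoc_of% (hl s), s.condition]
    · intro s m _ hm
      rw [← cancel_mono u, hm, hl s]

namespace IsInverseOp

variable {inv : MorphismOp C} {A B D T : C}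

theorem comp_inv_comp (hinv : IsInverseOp inv) (f : A ⟶ B) : f ≫ inv f ≫ f = f :=
  (hinv f).1.1

theorem inv_comp_inv (hinv : IsInverseOp inv) (f : A ⟶ B) : inv f ≫ f ≫ inv f = inv f :=
  (hinv f).1.2

theorem inv_eq (hinv : IsInverseOp inv) {f : A ⟶ B} {g : B ⟶ A} (h₁ : f ≫ g ≫ f = f)
    (h₂ : g ≫ f ≫ g = g) : inv f = g :=
  ((hinv f).2 g h₁ h₂).symm

theorem inv_inv (hinv : IsInverseOp inv) (f : A ⟶ B) : inv (inv f) = f :=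
  hinv.inv_eq (hinv.inv_comp_inv f) (hinv.comp_inv_comp f)

theorem inv_eq_self_of_idem (hinv : IsInverseOp inv) {e : A ⟶ A} (he : e ≫ e = e) :
    inv e = e :=
  hinv.inv_eq (by rw [he, he]) (by rw [he, he])

theorem inv_zero [HasZeroMorphisms C] (hinv : IsInverseOp inv) : inv (0 : A ⟶ B) = 0 :=
  hinv.inv_eq (by simp) (by simp)

theorem inv_comp_eq_id (hinv : IsInverseOp inv) (q : A ⟶ B) [Epi q] : inv q ≫ q = 𝟙 B := by
  rw [← cancel_epi q, hinv.comp_inv_comp, Category.comp_id]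

theorem inv_comp_self_idem (hinv : IsInverseOp inv) (f : A ⟶ B) :
    (inv f ≫ f) ≫ inv f ≫ f = inv f ≫ f := by
  rw [Category.assoc, reassoc_of% (hinv.inv_comp_inv f)]

theorem comp_inv_self_idem (hinv : IsInverseOp inv) (f : A ⟶ B) :
    (f ≫ inv f) ≫ f ≫ inv f = f ≫ inv f := by
  rw [Category.assoc, reassoc_of% (hinv.comp_inv_comp f)]

theorem idem_comp (hinv : IsInverseOp inv) {e f : A ⟶ A} (he : e ≫ e = e) (hf : f ≫ f = f) :
    (e ≫ f) ≫ e ≫ f = e ≫ f := by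
  set x := inv (e ≫ f) with hx_def
  -- `f ≫ x ≫ e` is another generalized inverse of `e ≫ f`
  have hx : f ≫ x ≫ e = x := by
    refine (hinv.inv_eq ?_ ?_).symm
    · simpa only [Category.assoc, reassoc_of% hf, reassoc_of% he] using hinv.comp_inv_comp (e ≫ f)
    · simpa only [Category.assoc, reassoc_of% hf, reassoc_of% he] using
        congrArg (fun y => f ≫ y ≫ e) (hinv.inv_comp_inv (e ≫ f))
  have hxx : x ≫ x = x := by
    conv_lhs => rw [← hx]
    simpa only [Category.assoc, ← hx_def] using
      (congrArg (fun y => f ≫ y ≫ e) (hinv.inv_comp_inv (e ≫ f))).trans hx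
  have hef : e ≫ f = x := by rw [← hinv.inv_inv (e ≫ f), ← hx_def, hinv.inv_eq_self_of_idem hxx]
  rw [hef, hxx]

theorem idem_comm (hinv : IsInverseOp inv) {e f : A ⟶ A} (he : e ≫ e = e) (hf : f ≫ f = f) :
    e ≫ f = f ≫ e := by
  have hef := hinv.idem_comp he hf
  have hfe := hinv.idem_comp hf he
  simp only [Category.assoc] at hef hfe
  calc e ≫ f = inv (e ≫ f) := (hinv.inv_eq_self_of_idem (hinv.idem_comp he hf)).symm
    _ = f ≫ e := hinv.inv_eq (by simp only [Category.assoc, reassoc_of% hf, reassoc_of% he, hef])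
        (by simp only [Category.assoc, reassoc_of% hf, reassoc_of% he, hfe])

theorem idem_antisymm (hinv : IsInverseOp inv) {e e' : A ⟶ A} (he : e ≫ e = e)
    (he' : e' ≫ e' = e') (h₁ : e ≫ e' = e) (h₂ : e' ≫ e = e') : e = e' := by
  rw [← h₁, hinv.idem_comm he he', h₂]

theorem idem_eq_iff (hinv : IsInverseOp inv) {e e' : A ⟶ A} (he : e ≫ e = e)
    (he' : e' ≫ e' = e') : e = e' ↔ ∀ {T : C} (g : T ⟶ A), g ≫ e = g ↔ g ≫ e' = g := by
  refine ⟨fun h _ _ => by rw [h], fun h => hinv.idem_antisymm he he' ?_ ?_⟩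
  · exact (h e).mp he
  · exact (h e').mpr he'

theorem inv_comp (hinv : IsInverseOp inv) (f : A ⟶ B) (g : B ⟶ D) :
    inv (f ≫ g) = inv g ≫ inv f := by
  have comm : g ≫ inv g ≫ inv f ≫ f = inv f ≫ f ≫ g ≫ inv g := by
    simpa only [Category.assoc] using
      hinv.idem_comm (hinv.comp_inv_self_idem g) (hinv.inv_comp_self_idem f)
  refine hinv.inv_eq ?_ ?_
  · simp only [Category.assoc]
    rw [reassoc_of% comm, reassoc_of% (hinv.comp_inv_comp f), hinv.comp_inv_comp g]
  · simp only [Category.assoc]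
    rw [reassoc_of% comm.symm, reassoc_of% (hinv.inv_comp_inv g), hinv.inv_comp_inv f]

theorem exists_comp_eq_iff (hinv : IsInverseOp inv) (m : D ⟶ B) (g : T ⟶ B) :
    (∃ t : T ⟶ D, t ≫ m = g) ↔ g ≫ inv m ≫ m = g := by
  constructor
  · rintro ⟨t, rfl⟩
    rw [Category.assoc, hinv.comp_inv_comp]
  · intro h
    exact ⟨g ≫ inv m, by rw [Category.assoc, h]⟩

theorem exists_comp_eq_iff_inv_comp_self (hinv : IsInverseOp inv) (m : D ⟶ B) (g : T ⟶ B) :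
    (∃ t : T ⟶ D, t ≫ m = g) ↔ (inv g ≫ g) ≫ inv m ≫ m = inv g ≫ g := by
  rw [hinv.exists_comp_eq_iff]
  constructor
  · intro h
    rw [Category.assoc, h]
  · intro h
    rw [← hinv.comp_inv_comp g]
    simpa only [Category.assoc] using congrArg (g ≫ ·) h

theorem inv_comp_self_of_epi_comp (hinv : IsInverseOp inv) (q : A ⟶ D) [Epi q] (p : D ⟶ B) :
    inv (q ≫ p) ≫ q ≫ p = inv p ≫ p := by
  rw [hinv.inv_comp, Category.assoc, reassoc_of% (hinv.inv_comp_eq_id q)]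

end IsInverseOp

theorem isImageOf_iff [HasZeroObject C] [HasZeroMorphisms C] {inv : MorphismOp C}
    (hinv : IsInverseOp inv) (hC : IsExactCategory C) {A B Y : C} (g : A ⟶ B) {v : Y ⟶ B}
    (hv : Mono v) : IsImageOf v g ↔ inv g ≫ g = inv v ≫ v := by
  constructor
  · rintro ⟨-, hgv, hmin⟩
    obtain ⟨I, q, p, hq, hp, rfl⟩ := hC.monoEpiFact g
    have hpv : (inv p ≫ p) ≫ inv v ≫ v = inv p ≫ p := by
      simpa only [hinv.inv_comp_self_of_epi_comp] using
        (hinv.exists_comp_eq_iff_inv_comp_self v _).mp hgv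
    have hvp := (hinv.exists_comp_eq_iff_inv_comp_self p v).mp (hmin q p hp rfl)
    rw [hinv.inv_comp_self_of_epi_comp]
    exact hinv.idem_antisymm (hinv.inv_comp_self_idem p) (hinv.inv_comp_self_idem v) hpv hvp
  · intro h
    refine ⟨hv, ?_, fun t m _ htm => (hinv.exists_comp_eq_iff_inv_comp_self m v).mpr ?_⟩
    · rw [hinv.exists_comp_eq_iff_inv_comp_self, h]
      exact hinv.inv_comp_self_idem v
    · rw [← h]
      exact (hinv.exists_comp_eq_iff_inv_comp_self m g).mp ⟨t, htm⟩

theorem IsKernelOf.exists_comp_eq_iff [HasZeroMorphisms C] {K A B T : C} {k : K ⟶ A}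
    {h : A ⟶ B} (hk : IsKernelOf k h) (g : T ⟶ A) : (∃ t : T ⟶ K, t ≫ k = g) ↔ g ≫ h = 0 := by
  constructor
  · rintro ⟨t, rfl⟩
    rw [Category.assoc, hk.1, comp_zero]
  · intro hg
    exact (hk.2 g hg).exists

namespace BaerStar

variable [HasZeroObject C] [HasZeroMorphisms C] {inv : MorphismOp C} (Bs : BaerStar C inv)
  {A B K T : C}

theorem prj_idem (f : A ⟶ B) : Bs.prj f ≫ Bs.prj f = Bs.prj f :=
  (Bs.prj_isProjection f).1

theorem prj_comp_self (f : A ⟶ B) : Bs.prj f ≫ f = 0 :=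
  (Bs.prj_spec f _).mpr ⟨𝟙 A, (Category.id_comp _).symm⟩

theorem comp_eq_zero_iff (f : A ⟶ B) (g : T ⟶ A) : g ≫ f = 0 ↔ g ≫ Bs.prj f = g := by
  rw [Bs.prj_spec]
  constructor
  · rintro ⟨h, rfl⟩
    rw [Category.assoc, Bs.prj_idem]
  · intro hg
    exact ⟨g, hg.symm⟩

theorem prj_prj_comp_self (hinv : IsInverseOp inv) (f : A ⟶ B) :
    Bs.prj (Bs.prj f) ≫ f = f := by
  have hf : inv f ≫ Bs.prj f = 0 := by
    simpa only [hinv.inv_comp, hinv.inv_eq_self_of_idem (Bs.prj_idem f), hinv.inv_zero] using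
      congrArg inv (Bs.prj_comp_self f)
  simpa only [hinv.inv_comp, hinv.inv_inv, hinv.inv_eq_self_of_idem (Bs.prj_idem _)] using
    congrArg inv ((Bs.comp_eq_zero_iff _ _).mp hf)

theorem comp_prj_prj_eq_zero_iff (hinv : IsInverseOp inv) (f : A ⟶ B) (g : T ⟶ A) :
    g ≫ Bs.prj (Bs.prj f) = 0 ↔ g ≫ f = 0 := by
  constructor
  · intro hg
    rw [← Bs.prj_prj_comp_self hinv f, ← Category.assoc, hg, zero_comp]
  · intro hg
    rw [← (Bs.comp_eq_zero_iff f g).mp hg, Category.assoc,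
      hinv.idem_comm (Bs.prj_idem f) (Bs.prj_idem _), Bs.prj_comp_self, comp_zero]

theorem prj_eq_of_isKernelOf (hinv : IsInverseOp inv) {k : K ⟶ A} {h : A ⟶ B}
    (hk : IsKernelOf k h) : Bs.prj h = inv k ≫ k := by
  refine (hinv.idem_eq_iff (Bs.prj_idem h) (hinv.inv_comp_self_idem k)).mpr fun g => ?_
  rw [← Bs.comp_eq_zero_iff, ← hinv.exists_comp_eq_iff, hk.exists_comp_eq_iff]

theorem comp_prj_eq_zero_iff_of_mono (hinv : IsInverseOp inv) (hC : IsExactCategory C)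
    {v : K ⟶ B} (hv : Mono v) (g : T ⟶ B) :
    g ≫ Bs.prj (inv v ≫ v) = 0 ↔ ∃ t : T ⟶ K, t ≫ v = g := by
  obtain ⟨D, h, hk⟩ := hC.normal v hv
  rw [← Bs.prj_eq_of_isKernelOf hinv hk, Bs.comp_prj_prj_eq_zero_iff hinv, hk.exists_comp_eq_iff]

end BaerStar

/-- In an exact inverse category with monos `u : X ⟶ A`, `v : Y ⟶ B`
and `f : A ⟶ B`: (i) `v` is the image of `f ∘ u` iff `P(f)(u ∘ u*) = v ∘ v*`; (ii) `u` is
the left edge of the pullback of `v` along `f` iff `P′(f)(v ∘ v*) = u ∘ u*`. -/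
theorem stmt13 [HasZeroObject C] [HasZeroMorphisms C] (inv : MorphismOp C)
    (hinv : IsInverseOp inv) (hC : IsExactCategory C) (Bs : BaerStar C inv)
    {X Y A B : C} (f : A ⟶ B) (u : X ⟶ A) (hu : Mono u) (v : Y ⟶ B) (hv : Mono v) :
    (IsImageOf v (u ≫ f) ↔ inv f ≫ (inv u ≫ u) ≫ f = inv v ≫ v) ∧
    ((∃ t : X ⟶ Y, IsPullback t u v f) ↔
      Bs.prj (f ≫ Bs.prj (inv v ≫ v)) = inv u ≫ u) := by
  constructor
  · rw [isImageOf_iff hinv hC (u ≫ f) hv, hinv.inv_comp]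
    simp only [Category.assoc]
  · rw [exists_isPullback_iff_of_mono,
      hinv.idem_eq_iff (Bs.prj_idem _) (hinv.inv_comp_self_idem u)]
    refine forall_congr' fun T => forall_congr' fun g => ?_
    rw [← Bs.comp_eq_zero_iff, ← Category.assoc, Bs.comp_prj_eq_zero_iff_of_mono hinv hC hv,
      hinv.exists_comp_eq_iff u g]
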